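/- For any nonempty closed convex cone C in a finite-dimensional real inner product space X and any x in X, x = Π_C(x) − Π_{C*}(−x), where Π_C denotes the metric projection onto C and C* = {d : ⟨d, x⟩ ≥ 0 for all x ∈ C} is the dual cone. -/

import Mathlib

/-- `p` is the metric projection of `x` onto `C`. -/
def IsMetricProj {X : Type*} [NormedAddCommGroup X] [InnerProductSpace ℝ X]
    (C : Set X) (x p : X) : Prop :=
  p ∈ C ∧ ∀ q ∈ C, ‖x - p‖ ≤ ‖x - q‖

/-- The dual cone `C* = {d : ⟨d, x⟩ ≥ 0 for all x ∈ C}`. -/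
def dualCone {X : Type*} [NormedAddCommGroup X] [InnerProductSpace ℝ X]
    (C : Set X) : Set X :=
  {d | ∀ x ∈ C, 0 ≤ (inner ℝ d x : ℝ)}

/-!
Both projections are characterised by the variational inequality of the projection onto a
convex set. For a cone `C` it says that `p = Π_C(x)` iff `p ∈ C`, `p - x ∈ C*` and
`⟪x - p, p⟫ = 0`; these three conditions give the variational inequality for `p - x` as a
projection of `-x` onto `C*`, so `Π_{C*}(-x) = p - x` by uniqueness of the projection.
-/

open scoped RealInnerProductSpace

section MetricProjection

variable {X : Type*} [NormedAddCommGroup X] [InnerProductSpace ℝ X] {C : Set X} {x p p' : X}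

theorem isMetricProj_iff_norm_eq_iInf (hpC : p ∈ C) :
    IsMetricProj C x p ↔ ‖x - p‖ = ⨅ c : C, ‖x - c‖ := by
  have : Nonempty C := ⟨⟨p, hpC⟩⟩
  refine ⟨fun hp => le_antisymm (le_ciInf fun c => hp.2 c c.2) ?_,
    fun h => ⟨hpC, fun q hq => ?_⟩⟩
  · exact ciInf_le ⟨0, Set.forall_mem_range.2 fun _ => norm_nonneg _⟩ (⟨p, hpC⟩ : C)
  · exact h ▸ ciInf_le ⟨0, Set.forall_mem_range.2 fun _ => norm_nonneg _⟩ (⟨q, hq⟩ : C)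

theorem isMetricProj_iff_inner_le (hconv : Convex ℝ C) :
    IsMetricProj C x p ↔ p ∈ C ∧ ∀ c ∈ C, ⟪x - p, c - p⟫ ≤ 0 :=
  ⟨fun hp => ⟨hp.1, (norm_eq_iInf_iff_real_inner_le_zero hconv hp.1).1
      ((isMetricProj_iff_norm_eq_iInf hp.1).1 hp)⟩,
    fun ⟨hpC, h⟩ => (isMetricProj_iff_norm_eq_iInf hpC).2
      ((norm_eq_iInf_iff_real_inner_le_zero hconv hpC).2 h)⟩

theorem IsMetricProj.eq (hconv : Convex ℝ C) (hp : IsMetricProj C x p)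
    (hp' : IsMetricProj C x p') : p = p' := by
  have h := ((isMetricProj_iff_inner_le hconv).1 hp).2 p' hp'.1
  have h' := ((isMetricProj_iff_inner_le hconv).1 hp').2 p hp.1
  have hsum : ⟪p' - p, p' - p⟫ = ⟪x - p, p' - p⟫ + ⟪x - p', p - p'⟫ := by
    simp only [inner_sub_left, inner_sub_right, real_inner_comm]
    ring
  have hzero : p' - p = 0 := inner_self_eq_zero.1 (le_antisymm (by linarith) real_inner_self_nonneg)
  exact (sub_eq_zero.1 hzero).symm

end MetricProjection

section Cone

variable {X : Type*} [NormedAddCommGroup X] [InnerProductSpace ℝ X] {C : Set X} {x p : X}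

theorem convex_dualCone (C : Set X) : Convex ℝ (dualCone C) := by
  intro d hd e he s t hs ht _ c hc
  rw [inner_add_left, real_inner_smul_left, real_inner_smul_left]
  have := hd c hc
  have := he c hc
  positivity

theorem isMetricProj_cone_iff (hconv : Convex ℝ C)
    (hcone : ∀ c ∈ C, ∀ t : ℝ, 0 ≤ t → t • c ∈ C) :
    IsMetricProj C x p ↔ p ∈ C ∧ p - x ∈ dualCone C ∧ ⟪x - p, p⟫ = 0 := by
  rw [isMetricProj_iff_inner_le hconv]
  refine ⟨fun ⟨hpC, hvar⟩ => ?_, fun ⟨hpC, hdual, horth⟩ => ⟨hpC, fun c hc => ?_⟩⟩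
  · have h0 := hvar 0 (by simpa using hcone p hpC 0 le_rfl)
    have h2 := hvar ((2 : ℝ) • p) (hcone p hpC 2 zero_le_two)
    rw [zero_sub, inner_neg_right] at h0
    rw [show (2 : ℝ) • p - p = p by module] at h2
    have horth : ⟪x - p, p⟫ = 0 := by linarith
    refine ⟨hpC, fun c hc => ?_, horth⟩
    have := hvar c hc
    rw [inner_sub_right, horth] at this
    rw [← neg_sub, inner_neg_left]
    linarith
  · have hc' := hdual c hc
    rw [← neg_sub, inner_neg_left] at hc'
    rw [inner_sub_right, horth]
    linarith

theorem IsMetricProj.sub_isMetricProj_dualCone (hconv : Convex ℝ C)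
    (hcone : ∀ c ∈ C, ∀ t : ℝ, 0 ≤ t → t • c ∈ C) (hp : IsMetricProj C x p) :
    IsMetricProj (dualCone C) (-x) (p - x) := by
  obtain ⟨hpC, hdual, horth⟩ := (isMetricProj_cone_iff hconv hcone).1 hp
  refine (isMetricProj_iff_inner_le (convex_dualCone C)).2 ⟨hdual, fun d hd => ?_⟩
  have hdp := hd p hpC
  rw [show -x - (p - x) = -p by abel, inner_neg_left, inner_sub_right, real_inner_comm d p,
    ← neg_sub x p, inner_neg_right, real_inner_comm (x - p) p, horth]
  linarith

end Cone

theorem moreau_decomposition_general {X : Type*} [NormedAddCommGroup X] [InnerProductSpace ℝ X]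
    (C : Set X) (hconv : Convex ℝ C)
    (hcone : ∀ c ∈ C, ∀ t : ℝ, 0 ≤ t → t • c ∈ C)
    (x p q : X) (hp : IsMetricProj C x p) (hq : IsMetricProj (dualCone C) (-x) q) :
    x = p - q := by
  have hq' : q = p - x := hq.eq (convex_dualCone C) (hp.sub_isMetricProj_dualCone hconv hcone)
  rw [hq', sub_sub_cancel]

/-- Moreau decomposition: `x = Π_C(x) − Π_{C*}(−x)`. -/
theorem moreau_decomposition {X : Type*} [NormedAddCommGroup X] [InnerProductSpace ℝ X]
    [FiniteDimensional ℝ X]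
    (C : Set X) (hne : C.Nonempty) (hcl : IsClosed C) (hconv : Convex ℝ C)
    (hcone : ∀ c ∈ C, ∀ t : ℝ, 0 ≤ t → t • c ∈ C)
    (x p q : X) (hp : IsMetricProj C x p) (hq : IsMetricProj (dualCone C) (-x) q) :
    x = p - q :=
  moreau_decomposition_general C hconv hcone x p q hp hq
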